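/- Under Assumptions 1, 3 (strengthened contractivity), 4–5, 6 and 7, suppose ξ ≥ 2·N_p·ℓ̄/(1−γ). Then there exists a class-K function λ₂, depending only on n, r, ξ and the moduli σ_{w,ic} and σ_Γ, with the following property: for every x ∈ 𝒳 and every θ with θ ≥ ε and (Γ(x) > θ or θ = ε), every optimal pair (𝐮*,q*) of P_{N_p}(x,θ) with q* = 1 and γ·Γ_max + θ·N_p·ℓ̄/ξ ≤ ω, and every w ∈ 𝒲, setting x⁺ := f(x,u*(0),w) and θ⁺ := f_θ(x⁺,θ), one has V*_{N_p}(x⁺,θ⁺) − V*_{N_p}(x,θ) ≤ −θ·α_ℓ(‖x‖) + λ₂(‖w‖) + ε·N_p·ℓ̄. -/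

import Mathlib

open Pointwise

noncomputable section

abbrev Vec (n : ℕ) := EuclideanSpace ℝ (Fin n)

/-- A class-K function: continuous (on `[0,∞)`), strictly increasing,
nonnegative, vanishing at `0`. -/
def ClassK (α : ℝ → ℝ) : Prop :=
  α 0 = 0 ∧ ContinuousOn α (Set.Ici 0) ∧ StrictMonoOn α (Set.Ici 0) ∧
    ∀ s, 0 ≤ s → 0 ≤ α s

/-- A class-K∞ function: class-K and unbounded. -/
def ClassKInf (α : ℝ → ℝ) : Prop :=
  ClassK α ∧ ∀ M : ℝ, ∃ s, 0 ≤ s ∧ M ≤ α s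

/-- Trajectory of the perturbed system: `φ(j; x, 𝐮, 𝐰)`. -/
def traj {n m r : ℕ} (f : Vec n → Vec m → Vec r → Vec n) (x : Vec n)
    (u : ℕ → Vec m) (w : ℕ → Vec r) : ℕ → Vec n
  | 0 => x
  | j + 1 => f (traj f x u w j) (u j) (w j)

/-- `min_{1 ≤ j ≤ q} g j`. -/
def minIcc (g : ℕ → ℝ) (q : ℕ) : ℝ := sInf (g '' Set.Icc 1 q)

/-- Pontryagin set difference `A ⊖ B`. -/
def pont {n : ℕ} (A B : Set (Vec n)) : Set (Vec n) := {x | ∀ b ∈ B, x + b ∈ A}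

/-- Data of the robust contraction-based MPC problem. -/
structure MPCSetup (n m r : ℕ) where
  /-- system dynamics -/
  f : Vec n → Vec m → Vec r → Vec n
  /-- state constraint set 𝒳 -/
  X : Set (Vec n)
  /-- input constraint set 𝒰 -/
  U : Set (Vec m)
  /-- disturbance bounds w̄ -/
  wbar : Fin r → ℝ
  /-- contractive function Γ -/
  Γ : Vec n → ℝ
  /-- moduli of continuity of f -/
  σx : Fin n → Fin n → ℝ → ℝ
  σu : Fin n → Fin m → ℝ → ℝ
  σw : Fin n → Fin r → ℝ → ℝ
  /-- modulus of continuity of Γ -/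
  σΓ : ℝ → ℝ
  /-- upper bounding K∞ function for Γ -/
  αΓ : ℝ → ℝ
  /-- contraction factor -/
  γ : ℝ
  /-- maximum prediction horizon -/
  Np : ℕ
  /-- the sets ℱ(j) -/
  Fset : ℕ → Set (Vec n)
  /-- the sets ℛ(j) -/
  Rset : ℕ → Set (Vec n)
  /-- stage cost -/
  ℓ : Vec n → Vec m → ℝ
  /-- upper bound on stage cost -/
  ℓbar : ℝ
  /-- lower bounding K function for the stage cost -/
  αℓ : ℝ → ℝ
  /-- moduli of continuity of the stage cost -/
  σℓx : ℝ → ℝ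
  σℓu : ℝ → ℝ
  /-- weight of the contraction term in the cost -/
  ξ : ℝ

namespace MPCSetup

variable {n m r : ℕ}

/-- The disturbance set 𝒲. -/
def W (S : MPCSetup n m r) : Set (Vec r) := {w | ∀ i, |w i| ≤ S.wbar i}

/-- Nominal (disturbance-free) trajectory `φ(j; x, 𝐮, 0)`. -/
def nom (S : MPCSetup n m r) (x : Vec n) (u : ℕ → Vec m) : ℕ → Vec n :=
  traj S.f x u fun _ => (0 : Vec r)

/-- Assumptions 1 (component-wise uniform continuity), 2 (constraint sets),
3 (strengthened contractivity), 4–5 (the sequences ℱ(j), ℛ(j)) and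
7 (stage cost), together with ξ > 0. -/
structure Assumptions (S : MPCSetup n m r) : Prop where
  hX_compact : IsCompact S.X
  hU_compact : IsCompact S.U
  hX_int : (interior S.X).Nonempty
  hU_int : (interior S.U).Nonempty
  -- Assumption 1
  hσx : ∀ i a, ClassK (S.σx i a)
  hσu : ∀ i b, ClassK (S.σu i b)
  hσw : ∀ i c, ClassK (S.σw i c)
  hf_cont : ∀ x ∈ S.X, ∀ u ∈ S.U, ∀ w ∈ S.W, ∀ x' ∈ S.X, ∀ u' ∈ S.U, ∀ w' ∈ S.W, ∀ i,
    |S.f x u w i - S.f x' u' w' i| ≤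
      (∑ a, S.σx i a (|x a - x' a|)) + (∑ b, S.σu i b (|u b - u' b|)) +
        ∑ c, S.σw i c (|w c - w' c|)
  -- Assumption 3 (strengthened contractivity)
  hΓ0 : S.Γ 0 = 0
  hΓpos : ∀ x, x ≠ 0 → 0 < S.Γ x
  hΓnonneg : ∀ x, 0 ≤ S.Γ x
  hσΓ : ClassK S.σΓ
  hΓuc : ∀ x ∈ S.X, ∀ x' ∈ S.X, |S.Γ x - S.Γ x'| ≤ S.σΓ ‖x - x'‖
  hαΓ : ClassKInf S.αΓ
  hΓub : ∀ x ∈ S.X, S.Γ x ≤ S.αΓ ‖x‖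
  hγ : S.γ ∈ Set.Ioo (0 : ℝ) 1
  hNp : 1 ≤ S.Np
  hcontract : ∀ x ∈ S.X, ∃ u : ℕ → Vec m, (∀ j < S.Np, u j ∈ S.U) ∧
    (∀ j ≤ S.Np, S.nom x u j ∈ pont S.X (S.Rset j)) ∧
    minIcc (fun j => S.Γ (S.nom x u j)) S.Np ≤ S.γ * S.Γ x
  -- Assumptions 4–5
  hF0 : S.Fset 0 = {z | ∀ i, |z i| ≤ ∑ a, S.σw i a (S.wbar a)}
  hR0 : S.Rset 0 = {0}
  hF : ∀ (x : Vec n) (u : ℕ → Vec m), (∀ j, u j ∈ S.U) →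
    (∀ j, S.nom x u j ∈ S.X) →
    ∀ x' : Vec n, x' - x ∈ S.Fset 0 → ∀ j, 1 ≤ j →
      S.nom x' u j ∈ {S.nom x u j} + S.Fset j
  hR : ∀ (x : Vec n) (u : ℕ → Vec m), (∀ j, u j ∈ S.U) →
    (∀ j, S.nom x u j ∈ S.X) →
    ∀ w : ℕ → Vec r, (∀ j, w j ∈ S.W) → ∀ j, 1 ≤ j →
      traj S.f x u w j ∈ {S.nom x u j} + S.Rset j
  hRNp : 0 ∈ pont S.X (S.Rset S.Np)
  hFR : ∀ j, S.Fset j + S.Rset j ⊆ S.Rset (j + 1)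
  -- Assumption 7
  hℓbar : 0 < S.ℓbar
  hℓ_bounds : ∀ x ∈ S.X, ∀ u ∈ S.U, 0 ≤ S.ℓ x u ∧ S.ℓ x u ≤ S.ℓbar
  hαℓ : ClassK S.αℓ
  hℓ_lb : ∀ x ∈ S.X, ∀ u ∈ S.U, S.αℓ ‖x‖ ≤ S.ℓ x u
  hσℓx : ClassK S.σℓx
  hσℓu : ClassK S.σℓu
  hℓ_uc : ∀ x ∈ S.X, ∀ u ∈ S.U, ∀ x' ∈ S.X, ∀ u' ∈ S.U,
    |S.ℓ x u - S.ℓ x' u'| ≤ S.σℓx ‖x - x'‖ + S.σℓu ‖u - u'‖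
  hξ : 0 < S.ξ

/-- A pair (𝐮, q) is feasible for `P_{N_p}(x, θ)`. -/
def Feasible (S : MPCSetup n m r) (x : Vec n) (u : ℕ → Vec m) (q : ℕ) : Prop :=
  q ∈ Set.Icc 1 S.Np ∧ (∀ j < q, u j ∈ S.U) ∧
    ∀ j ≤ q, S.nom x u j ∈ pont S.X (S.Rset j)

/-- Cost `V_{N_p}(x, θ, 𝐮, q)`. -/
def cost (S : MPCSetup n m r) (x : Vec n) (θ : ℝ) (u : ℕ → Vec m) (q : ℕ) : ℝ :=
  θ * ∑ j ∈ Finset.range q, S.ℓ (S.nom x u j) (u j) +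
    S.ξ * minIcc (fun j => S.Γ (S.nom x u j)) q

/-- Optimal value `V*_{N_p}(x, θ)`. -/
def Vstar (S : MPCSetup n m r) (x : Vec n) (θ : ℝ) : ℝ :=
  sInf {c | ∃ u q, S.Feasible x u q ∧ c = S.cost x θ u q}

/-- An optimal pair: a feasible pair attaining the optimal value, with the
smallest horizon among all feasible minimizers. -/
def OptimalPair (S : MPCSetup n m r) (x : Vec n) (θ : ℝ) (u : ℕ → Vec m) (q : ℕ) : Prop :=
  S.Feasible x u q ∧ S.cost x θ u q = S.Vstar x θ ∧
    ∀ u' q', S.Feasible x u' q' → S.cost x θ u' q' = S.Vstar x θ → q ≤ q'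

/-- The θ-update rule `f_θ`. -/
def fθ (S : MPCSetup n m r) (ε ν : ℝ) (x : Vec n) (θ' : ℝ) : ℝ :=
  if θ' < S.Γ x then θ' else max ε (ν * S.Γ x)

/-- Additional data: the RCIS Ω, the constant ω and `Γ_max := max_{x ∈ 𝒳} Γ(x)`. -/
structure Ext (S : MPCSetup n m r) where
  Ω : Set (Vec n)
  ω : ℝ
  Γmax : ℝ

/-- Assumption 6 (robust controlled invariant set) together with the
properties of ω and Γ_max. -/
structure ExtAssumptions (S : MPCSetup n m r) (E : S.Ext) : Prop where
  hΩX : E.Ω ⊆ S.X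
  hΩinv : ∀ x ∈ E.Ω, ∃ u ∈ S.U, ∀ w ∈ S.W, S.f x u w ∈ E.Ω
  hΩctrl : ∀ x ∈ E.Ω, ∃ u ∈ S.U, S.f x u 0 ∈ pont S.X (S.Rset 1)
  hΩR1 : 0 ∈ pont E.Ω (S.Rset 1)
  hω : 0 < E.ω
  hωsub : {x | S.Γ x ≤ E.ω} ⊆ pont E.Ω (S.Rset 1)
  hΓmax : IsGreatest (S.Γ '' S.X) E.Γmax
  hΓmax_pos : 0 < E.Γmax

end MPCSetup

/-!
With `q* = 1` the optimal value at `x` is `θ ℓ(x, u*(0)) + ξ Γ(z)` with `z = f(x, u*(0), 0)`, while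
the contractive control sequence over the full horizon bounds every optimal value by
`θ N_p ℓ̄ + ξ γ Γ`. Comparing the two, the hypothesis on `ω` puts `z` in `Ω ⊖ ℛ(1)`, so the perturbed
successor `x⁺` stays in `Ω ⊆ 𝒳` and `Γ(x⁺) ≤ Γ(z) + σ_Γ(‖x⁺ - z‖)`. As `θ⁺ ≤ ε + Γ(x⁺)` and
`N_p ℓ̄ + ξ γ ≤ ξ` by the choice of `ξ`, we get `V*(x⁺, θ⁺) ≤ ε N_p ℓ̄ + ξ Γ(x⁺)`, and subtracting
`V*(x, θ) ≥ θ α_ℓ(‖x‖) + ξ Γ(z)` leaves the descent with `λ₂(s) = ξ σ_Γ(s + Σ σ_{w,ic}(s))`.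
-/

namespace ClassK

variable {α β : ℝ → ℝ}

theorem nonneg (hα : ClassK α) {s : ℝ} (hs : 0 ≤ s) : 0 ≤ α s := hα.2.2.2 s hs

theorem mono (hα : ClassK α) {s t : ℝ} (hs : 0 ≤ s) (hst : s ≤ t) : α s ≤ α t :=
  hα.2.2.1.monotoneOn hs (Set.mem_Ici.2 (hs.trans hst)) hst

theorem comp (hα : ClassK α) (hβ : ClassK β) : ClassK fun s => α (β s) := by
  have hmaps : Set.MapsTo β (Set.Ici 0) (Set.Ici 0) := fun s hs => hβ.nonneg hs
  exact ⟨by simp only [hβ.1, hα.1], hα.2.1.comp hβ.2.1 hmaps, hα.2.2.1.comp hβ.2.2.1 hmaps,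
    fun s hs => hα.nonneg (hβ.nonneg hs)⟩

theorem const_mul (hα : ClassK α) {c : ℝ} (hc : 0 < c) : ClassK fun s => c * α s :=
  ⟨by simp only [hα.1, mul_zero], continuousOn_const.mul hα.2.1,
    fun _ hs _ ht hst => mul_lt_mul_of_pos_left (hα.2.2.1 hs ht hst) hc,
    fun _ hs => mul_nonneg hc.le (hα.nonneg hs)⟩

theorem add_sum (hα : ClassK α) {ι : Type*} (s : Finset ι) {g : ι → ℝ → ℝ}
    (hg : ∀ i ∈ s, ClassK (g i)) : ClassK fun t => α t + ∑ i ∈ s, g i t :=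
  ⟨by simp only [hα.1, Finset.sum_eq_zero fun i hi => (hg i hi).1, add_zero],
    hα.2.1.add (continuousOn_finsetSum s fun i hi => (hg i hi).2.1),
    hα.2.2.1.add_monotone fun _ ht _ _ htt' =>
      Finset.sum_le_sum fun i hi => (hg i hi).mono ht htt',
    fun _ ht => add_nonneg (hα.nonneg ht) (Finset.sum_nonneg fun i hi => (hg i hi).nonneg ht)⟩

end ClassK

theorem classK_id : ClassK fun s => s :=
  ⟨rfl, continuousOn_id, strictMonoOn_id, fun _ hs => hs⟩

theorem EuclideanSpace.norm_le_sum_norm {ι : Type*} [Fintype ι] (v : EuclideanSpace ℝ ι) :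
    ‖v‖ ≤ ∑ i, ‖v i‖ := by
  refine le_of_sq_le_sq ?_ (Finset.sum_nonneg fun i _ => norm_nonneg _)
  rw [EuclideanSpace.norm_sq_eq]
  exact Finset.sum_sq_le_sq_sum_of_nonneg fun i _ => norm_nonneg _

theorem mem_of_mem_pont {n : ℕ} {A B : Set (Vec n)} {x : Vec n} (hx : x ∈ pont A B)
    (hB : (0 : Vec n) ∈ B) : x ∈ A := by
  simpa using hx 0 hB

theorem minIcc_one (g : ℕ → ℝ) : minIcc g 1 = g 1 := by
  rw [minIcc, Set.Icc_self, Set.image_singleton, csInf_singleton]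

theorem minIcc_nonneg {g : ℕ → ℝ} (hg : ∀ j, 0 ≤ g j) {q : ℕ} (hq : 1 ≤ q) :
    0 ≤ minIcc g q :=
  le_csInf ((Set.nonempty_Icc.2 hq).image _) (by rintro _ ⟨j, _, rfl⟩; exact hg j)

theorem exists_forall_traj_mem {n m r : ℕ} {f : Vec n → Vec m → Vec r → Vec n}
    {Ω : Set (Vec n)} {U : Set (Vec m)} {w : Vec r} (hinv : ∀ y ∈ Ω, ∃ v ∈ U, f y v w ∈ Ω)
    {x : Vec n} (hx : x ∈ Ω) :
    ∃ u : ℕ → Vec m, (∀ j, u j ∈ U) ∧ ∀ j, traj f x u (fun _ => w) j ∈ Ω := by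
  choose! c hcU hcΩ using hinv
  let s : ℕ → Vec n := fun j => Nat.rec x (fun _ y => f y (c y) w) j
  have hs : ∀ j, s j ∈ Ω := by
    intro j
    induction j with
    | zero => exact hx
    | succ j ih => exact hcΩ _ ih
  have htraj : ∀ j, traj f x (fun j => c (s j)) (fun _ => w) j = s j := by
    intro j
    induction j with
    | zero => rfl
    | succ j ih => simp only [traj, ih]; rfl
  exact ⟨fun j => c (s j), fun j => hcU _ (hs j), fun j => htraj j ▸ hs j⟩

namespace MPCSetup

variable {n m r : ℕ} (S : MPCSetup n m r)

/-- The summand `s` keeps `λ₂` strictly increasing also when `n = 0` or `r = 0`. -/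
def disturbanceGain (s : ℝ) : ℝ :=
  S.ξ * S.σΓ (s + ∑ p : Fin n × Fin r, S.σw p.1 p.2 s)

theorem classK_disturbanceGain (hA : S.Assumptions) : ClassK S.disturbanceGain :=
  (hA.hσΓ.comp (classK_id.add_sum _ fun p _ => hA.hσw p.1 p.2)).const_mul hA.hξ

theorem zero_mem_W {w : Vec r} (hw : w ∈ S.W) : (0 : Vec r) ∈ S.W :=
  fun i => by simpa using (abs_nonneg (w i)).trans (hw i)

theorem zero_mem_Rset_one (hA : S.Assumptions) (hW : (0 : Vec r) ∈ S.W) :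
    (0 : Vec n) ∈ S.Rset 1 := by
  have hF : (0 : Vec n) ∈ S.Fset 0 := by
    rw [hA.hF0]
    intro i
    simpa using Finset.sum_nonneg fun a _ => (hA.hσw i a).nonneg (by simpa using hW a)
  simpa using hA.hFR 0 (Set.add_mem_add hF (by rw [hA.hR0]; rfl))

/-- Taking the zero disturbance in Assumption 5 along a nominal trajectory that stays in `Ω`
shows `0 ∈ ℛ(j)`. -/
theorem zero_mem_Rset (hA : S.Assumptions) {E : S.Ext} (hE : S.ExtAssumptions E)
    (hW : (0 : Vec r) ∈ S.W) (j : ℕ) : (0 : Vec n) ∈ S.Rset j := by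
  rcases Nat.eq_zero_or_pos j with rfl | hj
  · rw [hA.hR0]; rfl
  have hΩ : (0 : Vec n) ∈ E.Ω := by simpa using hE.hΩR1 0 (S.zero_mem_Rset_one hA hW)
  obtain ⟨u, hu, hnom⟩ := exists_forall_traj_mem (fun y hy => (hE.hΩinv y hy).imp
    fun v ⟨hv, hvw⟩ => ⟨hv, hvw 0 hW⟩) hΩ
  obtain ⟨_, rfl, b, hb, hbj⟩ := hA.hR 0 u hu (fun j => hE.hΩX (hnom j)) _ (fun _ => hW) j hj
  rwa [add_eq_left.mp hbj] at hb

theorem Feasible.nom_mem {S : MPCSetup n m r} (hA : S.Assumptions) {E : S.Ext}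
    (hE : S.ExtAssumptions E) (hW : (0 : Vec r) ∈ S.W) {x : Vec n} {u : ℕ → Vec m} {q j : ℕ}
    (hf : S.Feasible x u q) (hj : j ≤ q) : S.nom x u j ∈ S.X :=
  mem_of_mem_pont (hf.2.2 j hj) (S.zero_mem_Rset hA hE hW j)

theorem cost_one (x : Vec n) (θ : ℝ) (u : ℕ → Vec m) :
    S.cost x θ u 1 = θ * S.ℓ x (u 0) + S.ξ * S.Γ (S.f x (u 0) 0) := by
  rw [cost, minIcc_one, Finset.sum_range_one]
  rfl

section OptimalValue

variable (hA : S.Assumptions) {E : S.Ext} (hE : S.ExtAssumptions E) (hW : (0 : Vec r) ∈ S.W)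
include hA hE hW

theorem cost_nonneg {x : Vec n} {θ : ℝ} {u : ℕ → Vec m} {q : ℕ} (hθ : 0 ≤ θ)
    (hf : S.Feasible x u q) : 0 ≤ S.cost x θ u q := by
  refine add_nonneg (mul_nonneg hθ (Finset.sum_nonneg fun j hj => ?_))
    (mul_nonneg hA.hξ.le (minIcc_nonneg (fun j => hA.hΓnonneg _) hf.1.1))
  have hj := Finset.mem_range.mp hj
  exact (hA.hℓ_bounds _ (hf.nom_mem hA hE hW hj.le) _ (hf.2.1 j hj)).1

theorem Vstar_le_cost {x : Vec n} {θ : ℝ} {u : ℕ → Vec m} {q : ℕ} (hθ : 0 ≤ θ)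
    (hf : S.Feasible x u q) : S.Vstar x θ ≤ S.cost x θ u q :=
  csInf_le ⟨0, by rintro _ ⟨u', q', hf', rfl⟩; exact S.cost_nonneg hA hE hW hθ hf'⟩
    ⟨u, q, hf, rfl⟩

/-- Witness: the control sequence of strengthened contractivity, with horizon `N_p`. -/
theorem Vstar_le {x : Vec n} (hx : x ∈ S.X) {θ : ℝ} (hθ : 0 ≤ θ) :
    S.Vstar x θ ≤ θ * S.Np * S.ℓbar + S.ξ * (S.γ * S.Γ x) := by
  obtain ⟨u, hu, hnom, hmin⟩ := hA.hcontract x hx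
  have hf : S.Feasible x u S.Np := ⟨⟨hA.hNp, le_rfl⟩, hu, hnom⟩
  have hsum : ∑ j ∈ Finset.range S.Np, S.ℓ (S.nom x u j) (u j) ≤ S.Np * S.ℓbar := by
    refine (Finset.sum_le_card_nsmul _ _ S.ℓbar fun j hj => ?_).trans_eq (by simp)
    have hj := Finset.mem_range.mp hj
    exact (hA.hℓ_bounds _ (hf.nom_mem hA hE hW hj.le) _ (hu j hj)).2
  calc S.Vstar x θ ≤ S.cost x θ u S.Np := S.Vstar_le_cost hA hE hW hθ hf
    _ ≤ θ * (S.Np * S.ℓbar) + S.ξ * (S.γ * S.Γ x) :=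
      add_le_add (mul_le_mul_of_nonneg_left hsum hθ) (mul_le_mul_of_nonneg_left hmin hA.hξ.le)
    _ = θ * S.Np * S.ℓbar + S.ξ * (S.γ * S.Γ x) := by ring

theorem Vstar_le_of_le_add (hξ : S.ξ ≥ 2 * S.Np * S.ℓbar / (1 - S.γ)) {x : Vec n}
    (hx : x ∈ S.X) {ε θ : ℝ} (hθ : 0 ≤ θ) (hθε : θ ≤ ε + S.Γ x) :
    S.Vstar x θ ≤ ε * S.Np * S.ℓbar + S.ξ * S.Γ x := by
  have hγ := hA.hγ
  have hL : 0 ≤ (S.Np : ℝ) * S.ℓbar := by have := hA.hℓbar; positivity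
  have hcoef : S.Np * S.ℓbar + S.ξ * S.γ ≤ S.ξ := by
    rw [ge_iff_le, div_le_iff₀ (by linarith [hγ.2])] at hξ
    nlinarith [hγ.2]
  have hΓ := hA.hΓnonneg x
  calc S.Vstar x θ ≤ θ * S.Np * S.ℓbar + S.ξ * (S.γ * S.Γ x) := S.Vstar_le hA hE hW hx hθ
    _ ≤ (ε + S.Γ x) * (S.Np * S.ℓbar) + S.ξ * S.γ * S.Γ x := by
      rw [mul_assoc θ, ← mul_assoc S.ξ]; gcongr
    _ ≤ ε * S.Np * S.ℓbar + S.ξ * S.Γ x := by nlinarith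

end OptimalValue

theorem fθ_le (hA : S.Assumptions) {ε ν : ℝ} (hε : 0 ≤ ε) (hν : ν ≤ 1) (x : Vec n) (θ : ℝ) :
    S.fθ ε ν x θ ≤ ε + S.Γ x := by
  have hΓ := hA.hΓnonneg x
  unfold fθ
  split_ifs
  · linarith
  · exact max_le (by linarith) ((mul_le_of_le_one_left hΓ hν).trans (by linarith))

theorem le_fθ {ε ν θ : ℝ} (hθ : ε ≤ θ) (x : Vec n) : ε ≤ S.fθ ε ν x θ := by
  unfold fθ
  split_ifs
  · exact hθ
  · exact le_max_left _ _

theorem abs_f_sub_f_zero_le (hA : S.Assumptions) {x : Vec n} {v : Vec m} {w : Vec r}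
    (hx : x ∈ S.X) (hv : v ∈ S.U) (hw : w ∈ S.W) (i : Fin n) :
    |S.f x v w i - S.f x v 0 i| ≤ ∑ c, S.σw i c |w c| := by
  have h := hA.hf_cont x hx v hv w hw x hx v hv 0 (S.zero_mem_W hw) i
  simp only [sub_self, abs_zero, PiLp.zero_apply, sub_zero] at h
  rwa [Finset.sum_eq_zero fun a _ => (hA.hσx i a).1,
    Finset.sum_eq_zero fun b _ => (hA.hσu i b).1, zero_add, zero_add] at h

theorem f_sub_f_zero_mem_Fset_zero (hA : S.Assumptions) {x : Vec n} {v : Vec m} {w : Vec r}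
    (hx : x ∈ S.X) (hv : v ∈ S.U) (hw : w ∈ S.W) : S.f x v w - S.f x v 0 ∈ S.Fset 0 := by
  rw [hA.hF0]
  intro i
  exact (S.abs_f_sub_f_zero_le hA hx hv hw i).trans
    (Finset.sum_le_sum fun c _ => (hA.hσw i c).mono (abs_nonneg _) (hw c))

theorem norm_f_sub_f_zero_le (hA : S.Assumptions) {x : Vec n} {v : Vec m} {w : Vec r}
    (hx : x ∈ S.X) (hv : v ∈ S.U) (hw : w ∈ S.W) :
    ‖S.f x v w - S.f x v 0‖ ≤ ∑ p : Fin n × Fin r, S.σw p.1 p.2 ‖w‖ := by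
  rw [Fintype.sum_prod_type]
  refine (EuclideanSpace.norm_le_sum_norm _).trans (Finset.sum_le_sum fun i _ => ?_)
  rw [PiLp.sub_apply, Real.norm_eq_abs]
  exact (S.abs_f_sub_f_zero_le hA hx hv hw i).trans (Finset.sum_le_sum fun c _ =>
    (hA.hσw i c).mono (abs_nonneg _) (by simpa using PiLp.norm_apply_le w c))

theorem Γ_f_le (hA : S.Assumptions) {x : Vec n} {v : Vec m} {w : Vec r} (hx : x ∈ S.X)
    (hv : v ∈ S.U) (hw : w ∈ S.W) (hX : S.f x v w ∈ S.X) (hX₀ : S.f x v 0 ∈ S.X) :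
    S.ξ * S.Γ (S.f x v w) ≤ S.ξ * S.Γ (S.f x v 0) + S.disturbanceGain ‖w‖ := by
  have hnorm := S.norm_f_sub_f_zero_le hA hx hv hw
  have hσ : S.σΓ ‖S.f x v w - S.f x v 0‖ ≤
      S.σΓ (‖w‖ + ∑ p : Fin n × Fin r, S.σw p.1 p.2 ‖w‖) :=
    hA.hσΓ.mono (norm_nonneg _) (hnorm.trans (le_add_of_nonneg_left (norm_nonneg w)))
  have hΓ := (le_abs_self _).trans (hA.hΓuc _ hX _ hX₀)
  rw [disturbanceGain, ← mul_add]
  exact mul_le_mul_of_nonneg_left (by linarith) hA.hξ.le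

/-- `ξ Γ(f(x, u(0), 0)) ≤ V*(x, θ) ≤ θ N_p ℓ̄ + ξ γ Γ_max ≤ ξ ω` puts the nominal successor in
`Ω ⊖ ℛ(1)`, and the perturbed one differs from it by an element of `ℱ(0) ⊆ ℛ(1)`. -/
theorem f_mem_Ω (hA : S.Assumptions) {E : S.Ext} (hE : S.ExtAssumptions E) {x : Vec n}
    (hx : x ∈ S.X) {θ : ℝ} (hθ : 0 ≤ θ) {u : ℕ → Vec m} (hu : u 0 ∈ S.U)
    (hV : S.cost x θ u 1 = S.Vstar x θ) (hω : S.γ * E.Γmax + θ * S.Np * S.ℓbar / S.ξ ≤ E.ω)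
    {w : Vec r} (hw : w ∈ S.W) : S.f x (u 0) w ∈ E.Ω := by
  have hW := S.zero_mem_W hw
  have hξ := hA.hξ
  have hzΓ : S.ξ * S.Γ (S.f x (u 0) 0) ≤ S.ξ * E.ω := by
    have hℓ := mul_nonneg hθ (hA.hℓ_bounds x hx _ hu).1
    have hV' := S.Vstar_le hA hE hW hx hθ
    have hΓx := mul_le_mul_of_nonneg_left (hE.hΓmax.2 ⟨x, hx, rfl⟩) (mul_nonneg hξ.le hA.hγ.1.le)
    have hω' := mul_le_mul_of_nonneg_left hω hξ.le
    rw [mul_add, mul_div_cancel₀ _ hξ.ne'] at hω'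
    rw [cost_one] at hV
    nlinarith
  have hz : S.f x (u 0) 0 ∈ pont E.Ω (S.Rset 1) :=
    hE.hωsub (le_of_mul_le_mul_left hzΓ hξ)
  have hR : S.f x (u 0) w - S.f x (u 0) 0 ∈ S.Rset 1 := by
    simpa using hA.hFR 0 (Set.add_mem_add (S.f_sub_f_zero_mem_Fset_zero hA hx hu hw)
      (show (0 : Vec n) ∈ S.Rset 0 by rw [hA.hR0]; rfl))
  simpa using hz _ hR

end MPCSetup

/-- Lemma 4, cost descent for q* = 1: there is a class-K
function λ₂ bounding the increase of the optimal cost due to the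
disturbance when the optimal horizon is 1. -/
theorem cost_descent_q_eq_one {n m r : ℕ} (S : MPCSetup n m r)
    (hA : S.Assumptions) (E : S.Ext) (hE : S.ExtAssumptions E)
    (hξ : S.ξ ≥ 2 * S.Np * S.ℓbar / (1 - S.γ)) :
    ∃ lam₂ : ℝ → ℝ, ClassK lam₂ ∧
      ∀ ε ν : ℝ, 0 < ε → ν ∈ Set.Ioo (0 : ℝ) 1 →
      ∀ x ∈ S.X, ∀ θ : ℝ, ε ≤ θ → (θ < S.Γ x ∨ θ = ε) →
      ∀ (u : ℕ → Vec m) (q : ℕ), S.OptimalPair x θ u q → q = 1 →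
      S.γ * E.Γmax + θ * S.Np * S.ℓbar / S.ξ ≤ E.ω →
      ∀ w ∈ S.W,
        S.Vstar (S.f x (u 0) w) (S.fθ ε ν (S.f x (u 0) w) θ) - S.Vstar x θ ≤
          -(θ * S.αℓ ‖x‖) + lam₂ ‖w‖ + ε * S.Np * S.ℓbar := by
  refine ⟨S.disturbanceGain, S.classK_disturbanceGain hA, ?_⟩
  rintro ε ν hε ⟨-, hν⟩ x hx θ hθε - u q ⟨hf, hV, -⟩ rfl hω w hw
  have hW := S.zero_mem_W hw
  have hu : u 0 ∈ S.U := hf.2.1 0 one_pos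
  have hθ : 0 ≤ θ := hε.le.trans hθε
  have hX : S.f x (u 0) w ∈ S.X := hE.hΩX (S.f_mem_Ω hA hE hx hθ hu hV hω hw)
  have hX₀ : S.f x (u 0) 0 ∈ S.X := hf.nom_mem hA hE hW le_rfl
  have hnext := S.Vstar_le_of_le_add hA hE hW hξ hX (hε.le.trans (S.le_fθ hθε _))
    (S.fθ_le hA hε.le hν.le _ θ)
  have hℓ := mul_le_mul_of_nonneg_left (hA.hℓ_lb x hx _ hu) hθ
  rw [← hV, S.cost_one]
  linarith [S.Γ_f_le hA hx hu hw hX hX₀]
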